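/- For every k ∈ ℕ₀ and every admissible index pair (l,m), the k-th derivative of the radial polynomial satisfies sup_{0 ≤ r ≤ 1} |dᵏ/drᵏ R_m^{|l|}(r)| ≤ m^{2k} (for k ≥ 1; for k = 0 the bound is 1). -/

import Mathlib

/-- The radial (Zernike) polynomial `R_m^{|l|}` for admissible index pairs. -/
noncomputable def radialPolyAux (m l : ℕ) (r : ℝ) : ℝ :=
  ∑ j ∈ Finset.range ((m - l) / 2 + 1),
    (-1 : ℝ) ^ j * (Nat.factorial (m - j) : ℝ) /
      ((Nat.factorial j : ℝ) * (Nat.factorial ((m + l) / 2 - j) : ℝ) *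
        (Nat.factorial ((m - l) / 2 - j) : ℝ)) * r ^ (m - 2 * j)

/-- The radial polynomial with integer index and zero convention off admissible pairs. -/
noncomputable def radialPoly (m : ℕ) (l : ℤ) (r : ℝ) : ℝ :=
  if l.natAbs ≤ m ∧ Even (m - l.natAbs) then radialPolyAux m l.natAbs r else 0

/-!
Write `R_{p,q}` for `R_{p+q}^{|p-q|}`. Two facts give the bound.

For `|r| ≤ 1` put `s = √(1 - r²)`. Then `R_{p,q}(r)` is the coefficient of `X^p` in
`(rX + s)^p (-sX + r)^q`, a matrix entry of the rotation `(X, Y) ↦ (rX + sY, -sX + rY)` acting on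
binary forms of degree `p + q`. The rotation is unitary for the inner product in which the
monomials `X^i Y^(n-i)` are orthogonal with squared norms `i! (n-i)!` (Bombieri's, up to the
factor `n!`), so `|R_{p,q}(r)| ≤ 1`.

Comparing coefficients gives `R'_{p+1,q+1} = R'_{p,q} + (p+q+2) (R_{p,q+1} + R_{p+1,q})`, and
`R_{p,0} = X^p`. Induction on the order `k` and then on `n = p + q` bounds `|R^{(k)}_{p,q}|` on
`[-1, 1]` by `n^(2k)`, the inductive step being `(n-2)^(2k+2) + 2n (n-1)^(2k) ≤ n^(2k+2)`.
-/

open Polynomial Finset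
open scoped Nat

noncomputable section

theorem Polynomial.coeff_X_mul_derivative {R : Type*} [Semiring R] (h : R[X]) (i : ℕ) :
    (X * derivative h).coeff i = i * h.coeff i := by
  cases i with
  | zero => simp
  | succ i => rw [coeff_X_mul, coeff_derivative, ← Nat.cast_succ, Nat.cast_comm]

theorem Polynomial.iteratedDeriv_eval {𝕜 : Type*} [NontriviallyNormedField 𝕜] (p : 𝕜[X])
    (k : ℕ) : iteratedDeriv k (fun x => p.eval x) = fun x => (derivative^[k] p).eval x := by
  induction k generalizing p with
  | zero => simp
  | succ k ih =>
    rw [iteratedDeriv_succ', _root_.funext fun x => p.deriv (x := x), ih,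
      Function.iterate_succ_apply]

theorem Polynomial.abs_eval_iterate_derivative_X_pow_le (n k : ℕ) {r : ℝ} (hr : |r| ≤ 1) :
    |(derivative^[k] (X ^ n : ℝ[X])).eval r| ≤ (n : ℝ) ^ k := by
  rw [iterate_derivative_X_pow_eq_C_mul, eval_mul, eval_C, eval_pow, eval_X, abs_mul, abs_pow,
    Nat.abs_cast]
  calc (n.descFactorial k : ℝ) * |r| ^ (n - k) ≤ n.descFactorial k * 1 := by
        gcongr; exact pow_le_one₀ (abs_nonneg r) hr
    _ ≤ (n : ℝ) ^ k := by rw [mul_one]; exact_mod_cast Nat.descFactorial_le_pow n k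

theorem Nat.sum_range_choose_mul_choose_mul_choose (p q j : ℕ) :
    ∑ k ∈ range (p + 1), p.choose k * q.choose k * k.choose j =
      q.choose j * (p + q - j).choose q := by
  by_cases hj : j ≤ p ∧ j ≤ q
  -- `C(q,k) C(k,j) = C(q,j) C(q-j,k-j)`, then Vandermonde.
  · rw [show p + 1 = j + (p - j + 1) by omega, sum_range_add,
      sum_eq_zero fun k hk => by rw [Nat.choose_eq_zero_of_lt (mem_range.mp hk), mul_zero],
      zero_add]
    have hterm : ∀ i ∈ range (p - j + 1),
        p.choose (j + i) * q.choose (j + i) * (j + i).choose j =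
          q.choose j * ((q - j).choose i * p.choose (p - j - i)) := fun i hi => by
      have hi : i < p - j + 1 := mem_range.mp hi
      rw [mul_assoc, Nat.choose_mul (by omega), Nat.add_sub_cancel_left,
        Nat.choose_symm_of_eq_add (by omega : p = j + i + (p - j - i))]
      ring
    rw [sum_congr rfl hterm, ← mul_sum, ← Nat.sum_antidiagonal_eq_sum_range_succ
      (fun x y => (q - j).choose x * p.choose y), ← Nat.add_choose_eq,
      Nat.choose_symm_of_eq_add (by omega : q - j + p = p - j + q),
      show q - j + p = p + q - j by omega]
  · have hzero : ∀ k ∈ range (p + 1), p.choose k * q.choose k * k.choose j = 0 :=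
      fun k hk => by
      rcases lt_or_ge k j with hkj | hkj
      · rw [Nat.choose_eq_zero_of_lt hkj, mul_zero]
      · rw [Nat.choose_eq_zero_of_lt (by simp at hk; omega : q < k), mul_zero, zero_mul]
    rw [sum_eq_zero hzero]
    rcases lt_or_ge q j with hqj | hqj
    · rw [Nat.choose_eq_zero_of_lt hqj, zero_mul]
    · rw [Nat.choose_eq_zero_of_lt (by omega : p + q - j < q), mul_zero]

theorem one_add_pow_eq_sum_range {R : Type*} [CommSemiring R] (x : R) {k N : ℕ} (hk : k < N) :
    (1 + x) ^ k = ∑ j ∈ range N, k.choose j * x ^ (k - j) := by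
  have hvanish : ∀ j ≥ k + 1, (k.choose j : R) * x ^ (k - j) = 0 := fun j hj => by
    rw [Nat.choose_eq_zero_of_lt (by omega), Nat.cast_zero, zero_mul]
  rw [eventually_constant_sum hvanish hk, add_pow]
  exact sum_congr rfl fun j _ => by ring

theorem pow_add_mul_le_add_two_pow {a : ℝ} (ha : 0 ≤ a) (k : ℕ) :
    a ^ (2 * (k + 1)) + (a + 2) * ((a + 1) ^ (2 * k) + (a + 1) ^ (2 * k)) ≤
      (a + 2) ^ (2 * (k + 1)) := by
  have h1 : a ^ (2 * k) ≤ (a + 1) ^ (2 * k) := by gcongr; linarith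
  have h2 : (a + 1) ^ (2 * k) ≤ (a + 2) ^ (2 * k) := by gcongr; linarith
  calc a ^ (2 * (k + 1)) + (a + 2) * ((a + 1) ^ (2 * k) + (a + 1) ^ (2 * k))
      = a ^ 2 * a ^ (2 * k) + (2 * a + 4) * (a + 1) ^ (2 * k) := by ring
    _ ≤ (a ^ 2 + 2 * a + 4) * (a + 1) ^ (2 * k) := by nlinarith
    _ ≤ (a + 2) ^ 2 * (a + 2) ^ (2 * k) := by gcongr; nlinarith
    _ = (a + 2) ^ (2 * (k + 1)) := by ring

namespace Bombieri

def lin (a b : ℝ) : ℝ[X] := C a * X + C b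

-- `n!` times the Bombieri inner product of `g` and `h`, read as binary forms of degree `n`.
def pairing (n : ℕ) (g h : ℝ[X]) : ℝ :=
  ∑ i ∈ range (n + 1), g.coeff i * h.coeff i * (i ! * (n - i)! : ℝ)

-- With `h(X) = H(X, 1)`, `H` homogeneous of degree `n`, this is `(a ∂_X + b ∂_Y) H` at `Y = 1`
-- (Euler: `∂_Y H = n h - X h'`); it is the adjoint of multiplication by `aX + bY`.
def adjoint (a b : ℝ) (n : ℕ) (h : ℝ[X]) : ℝ[X] :=
  C a * derivative h + C b * (C (n : ℝ) * h - X * derivative h)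

section Pairing

variable (n : ℕ) (g h : ℝ[X])

theorem pairing_comm : pairing n g h = pairing n h g := by
  simp only [pairing, mul_comm (g.coeff _)]

theorem pairing_add_right (h' : ℝ[X]) :
    pairing n g (h + h') = pairing n g h + pairing n g h' := by
  simp only [pairing, ← sum_add_distrib, coeff_add]
  exact sum_congr rfl fun _ _ => by ring

theorem pairing_C_mul_right (a : ℝ) :
    pairing n g (C a * h) = a * pairing n g h := by
  simp only [pairing, mul_sum, coeff_C_mul]
  exact sum_congr rfl fun _ _ => by ring

theorem pairing_X_mul_left :
    pairing (n + 1) (X * g) h = pairing n g (derivative h) := by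
  rw [pairing, sum_range_succ']
  simp only [coeff_X_mul_zero, zero_mul, add_zero, pairing]
  refine sum_congr rfl fun i _ => ?_
  rw [coeff_X_mul, coeff_derivative, Nat.succ_sub_succ, Nat.factorial_succ]
  push_cast
  ring

theorem pairing_succ_of_coeff_eq_zero (hg : g.coeff (n + 1) = 0) :
    pairing (n + 1) g h =
      pairing n g (C ((n : ℝ) + 1) * h - X * derivative h) := by
  rw [pairing, sum_range_succ, hg]
  simp only [zero_mul, add_zero]
  refine sum_congr rfl fun i hi => ?_
  have hin : i ≤ n := Nat.lt_succ_iff.mp (mem_range.mp hi)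
  rw [coeff_sub, coeff_C_mul, coeff_X_mul_derivative, Nat.succ_sub hin, Nat.factorial_succ,
    Nat.cast_mul, Nat.cast_succ, Nat.cast_sub hin]
  ring

end Pairing

theorem pairing_lin_mul_left (a b : ℝ) (n : ℕ) (g h : ℝ[X]) (hg : g.natDegree ≤ n) :
    pairing (n + 1) (lin a b * g) h = pairing n g (adjoint a b (n + 1) h) := by
  have hg' : g.coeff (n + 1) = 0 := coeff_eq_zero_of_natDegree_lt (by omega)
  rw [show lin a b * g = C a * (X * g) + C b * g by unfold lin; ring, pairing_comm,
    pairing_add_right, pairing_C_mul_right, pairing_C_mul_right,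
    pairing_comm _ h, pairing_X_mul_left, pairing_comm _ h,
    pairing_succ_of_coeff_eq_zero _ _ _ hg', adjoint, pairing_add_right,
    pairing_C_mul_right, pairing_C_mul_right]
  push_cast
  ring

theorem adjoint_lin_mul (a b c d : ℝ) (n : ℕ) (h : ℝ[X]) :
    adjoint a b (n + 1) (lin c d * h) = lin c d * adjoint a b n h + C (a * c + b * d) * h := by
  simp only [adjoint, lin, derivative_mul, derivative_C, derivative_X, Nat.cast_succ, map_add,
    map_one, map_mul]
  ring

theorem natDegree_lin_pow_mul_lin_pow_le (a b c d : ℝ) (p q : ℕ) :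
    (lin a b ^ p * lin c d ^ q).natDegree ≤ p + q := by
  refine natDegree_mul_le.trans (add_le_add ?_ ?_) <;>
    exact (natDegree_pow_le_of_le _ natDegree_linear_le).trans (mul_one _).le

section Orthonormal

variable {a b c d : ℝ}

theorem adjoint_lin_pow_eq_zero (horth : a * c + b * d = 0) (q : ℕ) :
    adjoint a b q (lin c d ^ q) = 0 := by
  induction q with
  | zero => simp [adjoint]
  | succ q ih => rw [pow_succ', adjoint_lin_mul, ih, horth]; simp

theorem adjoint_lin_pow_mul_lin_pow (hab : a * a + b * b = 1) (horth : a * c + b * d = 0)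
    (p q : ℕ) :
    adjoint a b (p + q + 1) (lin a b ^ (p + 1) * lin c d ^ q) =
      C ((p : ℝ) + 1) * (lin a b ^ p * lin c d ^ q) := by
  induction p with
  | zero =>
    rw [zero_add, pow_one, adjoint_lin_mul, adjoint_lin_pow_eq_zero horth, hab]
    simp
  | succ p ih =>
    rw [show p + 1 + q + 1 = p + q + 1 + 1 by ring, pow_succ' _ (p + 1), mul_assoc,
      adjoint_lin_mul, ih, hab]
    simp only [Nat.cast_succ, map_add, map_one]
    ring

theorem pairing_lin_pow_mul_self (hab : a * a + b * b = 1)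
    (horth : a * c + b * d = 0) (p q : ℕ) :
    pairing (p + q) (lin a b ^ p * lin c d ^ q) (lin a b ^ p * lin c d ^ q) =
      p ! * pairing q (lin c d ^ q) (lin c d ^ q) := by
  induction p with
  | zero => simp
  | succ p ih =>
    have hsplit : lin a b ^ (p + 1) * lin c d ^ q = lin a b * (lin a b ^ p * lin c d ^ q) := by
      ring
    nth_rewrite 1 [hsplit]
    rw [show p + 1 + q = p + q + 1 by ring, pairing_lin_mul_left _ _ _ _ _
      (natDegree_lin_pow_mul_lin_pow_le a b c d p q), adjoint_lin_pow_mul_lin_pow hab horth,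
      pairing_C_mul_right, ih, Nat.factorial_succ]
    push_cast
    ring

theorem pairing_self_lin_pow_mul_lin_pow (hab : a * a + b * b = 1)
    (hcd : c * c + d * d = 1) (horth : a * c + b * d = 0) (p q : ℕ) :
    pairing (p + q) (lin a b ^ p * lin c d ^ q) (lin a b ^ p * lin c d ^ q) =
      p ! * q ! := by
  have hq := pairing_lin_pow_mul_self (c := a) (d := b) hcd (by linarith) q 0
  simp only [pow_zero, mul_one, add_zero] at hq
  rw [pairing_lin_pow_mul_self hab horth, hq]
  simp [pairing]

theorem abs_coeff_lin_pow_mul_lin_pow_le_one (hab : a * a + b * b = 1)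
    (hcd : c * c + d * d = 1) (horth : a * c + b * d = 0) (p q : ℕ) :
    |(lin a b ^ p * lin c d ^ q).coeff p| ≤ 1 := by
  set f := lin a b ^ p * lin c d ^ q
  have hterm : f.coeff p ^ 2 * (p ! * q ! : ℝ) ≤ pairing (p + q) f f := by
    rw [pairing, show f.coeff p ^ 2 * (p ! * q ! : ℝ) =
      f.coeff p * f.coeff p * (p ! * (p + q - p)! : ℝ) by rw [Nat.add_sub_cancel_left]; ring]
    exact single_le_sum (f := fun i => f.coeff i * f.coeff i * (i ! * (p + q - i)! : ℝ))
      (fun i _ => mul_nonneg (mul_self_nonneg _) (by positivity)) (mem_range.mpr (by omega))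
  rw [pairing_self_lin_pow_mul_lin_pow hab hcd horth] at hterm
  exact (sq_le_one_iff_abs_le_one _).mp
    (le_of_mul_le_mul_right (by linarith) (by positivity : (0 : ℝ) < p ! * q !))

end Orthonormal

theorem coeff_lin_pow (a b : ℝ) (n i : ℕ) :
    (lin a b ^ n).coeff i = n.choose i * a ^ i * b ^ (n - i) := by
  simp only [lin, add_pow, finsetSum_coeff, mul_pow, ← C_pow, ← C_eq_natCast,
    mul_right_comm _ (X ^ _), mul_assoc, ← C_mul, coeff_C_mul_X_pow, sum_ite_eq, mem_range]
  split_ifs with hi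
  · ring
  · simp [Nat.choose_eq_zero_of_lt (by omega : n < i)]

theorem coeff_lin_pow_mul_lin_pow (a b : ℝ) (p q : ℕ) :
    (lin a b ^ p * lin (-b) a ^ q).coeff p =
      ∑ k ∈ range (p + 1), (-1) ^ k * p.choose k * q.choose k * a ^ (p - k) * a ^ (q - k) *
        (b ^ 2) ^ k := by
  rw [mul_comm, coeff_mul, Nat.sum_antidiagonal_eq_sum_range_succ_mk]
  refine sum_congr rfl fun k hk => ?_
  have hkp : k ≤ p := Nat.lt_succ_iff.mp (mem_range.mp hk)
  rw [coeff_lin_pow, coeff_lin_pow, Nat.choose_symm hkp, Nat.sub_sub_self hkp, neg_pow]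
  ring

end Bombieri

-- `zernike p q` is the radial polynomial `R_{p+q}^{|p-q|}`. The coefficient is set to zero off
-- `j ≤ min p q` so that the defining sum may run over any long enough range.
def zernikeCoeff (p q j : ℕ) : ℝ :=
  if j ≤ p ∧ j ≤ q then (-1) ^ j * (p + q - j)! / (j ! * (p - j)! * (q - j)!) else 0

def zernike (p q : ℕ) : ℝ[X] :=
  ∑ j ∈ range (p + q + 1), C (zernikeCoeff p q j) * X ^ (p + q - 2 * j)

theorem zernikeCoeff_comm (p q j : ℕ) : zernikeCoeff p q j = zernikeCoeff q p j := by
  unfold zernikeCoeff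
  rw [add_comm p q]
  by_cases h : j ≤ p ∧ j ≤ q
  · rw [if_pos h, if_pos h.symm]
    ring
  · rw [if_neg h, if_neg fun h' => h h'.symm]

theorem zernike_comm (p q : ℕ) : zernike p q = zernike q p := by
  simp only [zernike, zernikeCoeff_comm p q, add_comm p q]

theorem zernikeCoeff_eq_zero {p q j : ℕ} (h : p < j ∨ q < j) : zernikeCoeff p q j = 0 :=
  if_neg (by omega)

theorem zernikeCoeff_add_add (j u v : ℕ) :
    zernikeCoeff (j + u) (j + v) j = (-1) ^ j * (j + u + v)! / (j ! * u ! * v !) := by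
  rw [zernikeCoeff, if_pos (by omega), show j + u + (j + v) - j = j + u + v by omega,
    Nat.add_sub_cancel_left, Nat.add_sub_cancel_left]

theorem zernikeCoeff_eq_choose (p q j : ℕ) :
    zernikeCoeff p q j = (-1) ^ j * (q.choose j * (p + q - j).choose q : ℕ) := by
  by_cases hj : j ≤ p ∧ j ≤ q
  · obtain ⟨u, rfl⟩ := Nat.exists_eq_add_of_le hj.1
    obtain ⟨v, rfl⟩ := Nat.exists_eq_add_of_le hj.2
    rw [zernikeCoeff_add_add, show j + u + (j + v) - j = j + v + u by omega, Nat.cast_mul,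
      Nat.cast_choose ℝ (by omega), Nat.cast_choose ℝ (by omega), Nat.add_sub_cancel_left,
      Nat.add_sub_cancel_left, show j + v + u = j + u + v by ring]
    field_simp
  · rw [zernikeCoeff_eq_zero (by omega)]
    rcases lt_or_ge q j with hqj | hqj
    · simp [Nat.choose_eq_zero_of_lt hqj]
    · simp [Nat.choose_eq_zero_of_lt (by omega : p + q - j < q)]

theorem zernike_eq_sum_range (p q : ℕ) {N : ℕ} (hN : min p q < N) :
    zernike p q = ∑ j ∈ range N, C (zernikeCoeff p q j) * X ^ (p + q - 2 * j) := by
  have hvanish : ∀ j ≥ min p q + 1, C (zernikeCoeff p q j) * X ^ (p + q - 2 * j) = 0 :=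
    fun j hj => by rw [zernikeCoeff_eq_zero (by omega), C_0, zero_mul]
  rw [zernike, eventually_constant_sum hvanish (by omega), eventually_constant_sum hvanish hN]

theorem zernike_zero_right (p : ℕ) : zernike p 0 = X ^ p := by
  rw [zernike_eq_sum_range p 0 (by simp : min p 0 < 1)]
  simp [zernikeCoeff, (Nat.factorial_pos p).ne']

theorem eval_zernike (p q : ℕ) (r : ℝ) :
    (zernike p q).eval r =
      ∑ k ∈ range (p + 1), (-1) ^ k * p.choose k * q.choose k * r ^ (p - k) * r ^ (q - k) *
        (1 - r ^ 2) ^ k := by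
  have hterm : ∀ j, ∀ k ∈ range (p + 1),
      (-1) ^ k * p.choose k * q.choose k * r ^ (p - k) * r ^ (q - k) *
        (k.choose j * (-r ^ 2) ^ (k - j)) =
      (-1) ^ j * ((p.choose k * q.choose k * k.choose j : ℕ) : ℝ) * r ^ (p + q - 2 * j) :=
    fun j k hk => by
      by_cases hjkq : j ≤ k ∧ k ≤ q
      · obtain ⟨t, rfl⟩ := Nat.exists_eq_add_of_le hjkq.1
        obtain ⟨a, rfl⟩ := Nat.exists_eq_add_of_le (Nat.lt_succ_iff.mp (mem_range.mp hk))
        obtain ⟨b, rfl⟩ := Nat.exists_eq_add_of_le hjkq.2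
        rw [show j + t + a + (j + t + b) - 2 * j = a + b + 2 * t by omega,
          Nat.add_sub_cancel_left, Nat.add_sub_cancel_left, Nat.add_sub_cancel_left]
        push_cast
        -- the signs combine as `(-1)^(j+t) (-1)^t = (-1)^j`
        ring_nf
        simp [pow_mul']
      · rcases not_and_or.mp hjkq with hkj | hqk
        · simp [Nat.choose_eq_zero_of_lt (not_le.mp hkj)]
        · simp [Nat.choose_eq_zero_of_lt (not_le.mp hqk)]
  rw [zernike_eq_sum_range p q (by omega : min p q < p + 1), eval_finsetSum]
  symm
  rw [sum_congr rfl fun k hk => by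
    rw [sub_eq_add_neg, one_add_pow_eq_sum_range _ (mem_range.mp hk), mul_sum], sum_comm]
  refine sum_congr rfl fun j _ => ?_
  rw [sum_congr rfl (hterm j), ← sum_mul, ← mul_sum, ← Nat.cast_sum,
    Nat.sum_range_choose_mul_choose_mul_choose, ← zernikeCoeff_eq_choose]
  simp

theorem abs_eval_zernike_le_one (p q : ℕ) {r : ℝ} (hr : |r| ≤ 1) :
    |(zernike p q).eval r| ≤ 1 := by
  have hr2 : r * r ≤ 1 := by nlinarith [abs_mul_abs_self r, abs_nonneg r]
  have hs : √(1 - r ^ 2) ^ 2 = 1 - r ^ 2 := Real.sq_sqrt (by nlinarith)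
  have h := Bombieri.abs_coeff_lin_pow_mul_lin_pow_le_one (a := r) (b := √(1 - r ^ 2))
    (c := -√(1 - r ^ 2)) (d := r) (by nlinarith) (by nlinarith) (by ring) p q
  rwa [Bombieri.coeff_lin_pow_mul_lin_pow, hs, ← eval_zernike] at h

theorem zernikeCoeff_zero (p q : ℕ) : zernikeCoeff p q 0 = (p + q)! / (p ! * q !) := by
  simp [zernikeCoeff]

theorem zernikeCoeff_add_add_succ (j u v : ℕ) :
    zernikeCoeff (j + u) (j + 1 + v) (j + 1) =
      u * ((-1) ^ (j + 1) * (j + u + v)! / ((j + 1)! * u ! * v !)) := by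
  rcases u with _ | u
  · simp [zernikeCoeff_eq_zero]
  · rw [show j + (u + 1) = j + 1 + u by ring, zernikeCoeff_add_add, Nat.factorial_succ u]
    push_cast
    field_simp

theorem zernikeCoeff_succ_succ_zero (p q : ℕ) :
    zernikeCoeff (p + 1) (q + 1) 0 * (p + q + 2 : ℕ) =
      (p + q + 2 : ℕ) * (zernikeCoeff p (q + 1) 0 + zernikeCoeff (p + 1) q 0) := by
  simp only [zernikeCoeff_zero, show p + 1 + (q + 1) = (p + q + 1) + 1 by ring,
    show p + (q + 1) = p + q + 1 by ring, show p + 1 + q = p + q + 1 by ring, Nat.factorial_succ]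
  push_cast
  field_simp
  ring

theorem zernikeCoeff_succ_succ (p q j : ℕ) :
    zernikeCoeff (p + 1) (q + 1) (j + 1) * (p + q - 2 * j : ℕ) =
      zernikeCoeff p q j * (p + q - 2 * j : ℕ) +
        (p + q + 2 : ℕ) * (zernikeCoeff p (q + 1) (j + 1) + zernikeCoeff (p + 1) q (j + 1)) := by
  by_cases hj : j ≤ p ∧ j ≤ q
  · obtain ⟨u, rfl⟩ := Nat.exists_eq_add_of_le hj.1
    obtain ⟨v, rfl⟩ := Nat.exists_eq_add_of_le hj.2
    rw [show j + u + 1 = j + 1 + u by ring, show j + v + 1 = j + 1 + v by ring,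
      zernikeCoeff_add_add, zernikeCoeff_add_add, zernikeCoeff_add_add_succ,
      zernikeCoeff_comm (j + 1 + u), zernikeCoeff_add_add_succ, add_right_comm j v u,
      show j + u + (j + v) - 2 * j = u + v by omega,
      show j + 1 + u + v = (j + u + v) + 1 by ring, Nat.factorial_succ (j + u + v),
      Nat.factorial_succ j]
    push_cast
    field_simp
    ring
  · rw [zernikeCoeff_eq_zero (by omega), zernikeCoeff_eq_zero (by omega),
      zernikeCoeff_eq_zero (by omega), zernikeCoeff_eq_zero (by omega)]
    simp

theorem derivative_zernike_succ_succ (p q : ℕ) :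
    derivative (zernike (p + 1) (q + 1)) =
      derivative (zernike p q) +
        C ((p + q + 2 : ℕ) : ℝ) * (zernike p (q + 1) + zernike (p + 1) q) := by
  have hzero : C (zernikeCoeff (p + 1) (q + 1) 0 * ((p + 1 + (q + 1) - 2 * 0 : ℕ) : ℝ)) *
        X ^ (p + 1 + (q + 1) - 2 * 0 - 1) =
      C ((p + q + 2 : ℕ) : ℝ) * (C (zernikeCoeff p (q + 1) 0) * X ^ (p + (q + 1) - 2 * 0) +
        C (zernikeCoeff (p + 1) q 0) * X ^ (p + 1 + q - 2 * 0)) := by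
    rw [show p + 1 + (q + 1) - 2 * 0 = p + q + 2 by omega,
      show p + (q + 1) - 2 * 0 = p + q + 2 - 1 by omega,
      show p + 1 + q - 2 * 0 = p + q + 2 - 1 by omega, zernikeCoeff_succ_succ_zero]
    simp only [map_add, map_mul]
    ring
  have hsucc : ∀ j, C (zernikeCoeff (p + 1) (q + 1) (j + 1) *
        ((p + 1 + (q + 1) - 2 * (j + 1) : ℕ) : ℝ)) * X ^ (p + 1 + (q + 1) - 2 * (j + 1) - 1) =
      C (zernikeCoeff p q j * ((p + q - 2 * j : ℕ) : ℝ)) * X ^ (p + q - 2 * j - 1) +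
        C ((p + q + 2 : ℕ) : ℝ) *
          (C (zernikeCoeff p (q + 1) (j + 1)) * X ^ (p + (q + 1) - 2 * (j + 1)) +
            C (zernikeCoeff (p + 1) q (j + 1)) * X ^ (p + 1 + q - 2 * (j + 1))) := fun j => by
    rw [show p + 1 + (q + 1) - 2 * (j + 1) = p + q - 2 * j by omega,
      show p + (q + 1) - 2 * (j + 1) = p + q - 2 * j - 1 by omega,
      show p + 1 + q - 2 * (j + 1) = p + q - 2 * j - 1 by omega, zernikeCoeff_succ_succ]
    simp only [map_add, map_mul]
    ring
  rw [zernike_eq_sum_range (p + 1) (q + 1) (N := p + q + 2 + 1) (by omega),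
    zernike_eq_sum_range p q (N := p + q + 2) (by omega),
    zernike_eq_sum_range p (q + 1) (N := p + q + 2 + 1) (by omega),
    zernike_eq_sum_range (p + 1) q (N := p + q + 2 + 1) (by omega)]
  simp only [derivative_sum, derivative_C_mul_X_pow]
  rw [sum_range_succ' _ (p + q + 2), sum_range_succ' _ (p + q + 2), sum_range_succ' _ (p + q + 2),
    sum_congr rfl fun j _ => hsucc j, hzero, sum_add_distrib, ← mul_sum, sum_add_distrib]
  ring

theorem abs_eval_iterate_derivative_zernike_succ_succ_le (k p q : ℕ) (r : ℝ) :
    |(derivative^[k + 1] (zernike (p + 1) (q + 1))).eval r| ≤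
      |(derivative^[k + 1] (zernike p q)).eval r| + ((p + q + 2 : ℕ) : ℝ) *
        (|(derivative^[k] (zernike p (q + 1))).eval r| +
          |(derivative^[k] (zernike (p + 1) q)).eval r|) := by
  rw [Function.iterate_succ_apply, derivative_zernike_succ_succ, iterate_map_add,
    iterate_derivative_C_mul, iterate_map_add, ← Function.iterate_succ_apply, eval_add, eval_mul,
    eval_C, eval_add]
  refine (abs_add_le _ _).trans ?_
  rw [abs_mul, Nat.abs_cast]
  gcongr
  exact abs_add_le _ _

theorem abs_eval_iterate_derivative_zernike_le (k p q : ℕ) {r : ℝ} (hr : |r| ≤ 1) :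
    |(derivative^[k] (zernike p q)).eval r| ≤ ((p + q : ℕ) : ℝ) ^ (2 * k) := by
  induction k generalizing p q with
  | zero => simpa using abs_eval_zernike_le_one p q hr
  | succ k ihk =>
    have hXpow (n : ℕ) :
        |(derivative^[k + 1] (X ^ n : ℝ[X])).eval r| ≤ (n : ℝ) ^ (2 * (k + 1)) := by
      refine (Polynomial.abs_eval_iterate_derivative_X_pow_le n (k + 1) hr).trans ?_
      rcases Nat.eq_zero_or_pos n with rfl | hn
      · simp
      · exact pow_le_pow_right₀ (by exact_mod_cast hn) (by omega)
    induction p generalizing q with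
    | zero => simpa [zernike_comm 0 q, zernike_zero_right] using hXpow q
    | succ p ihp =>
      cases q with
      | zero => simpa [zernike_zero_right] using hXpow (p + 1)
      | succ q =>
        set a : ℝ := ((p + q : ℕ) : ℝ)
        have hA := ihp q
        have hB : |(derivative^[k] (zernike p (q + 1))).eval r| ≤ (a + 1) ^ (2 * k) := by
          convert ihk p (q + 1) using 2; push_cast [a]; ring
        have hC : |(derivative^[k] (zernike (p + 1) q)).eval r| ≤ (a + 1) ^ (2 * k) := by
          convert ihk (p + 1) q using 2; push_cast [a]; ring
        calc _ ≤ _ := abs_eval_iterate_derivative_zernike_succ_succ_le k p q r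
          _ ≤ a ^ (2 * (k + 1)) + (a + 2) * ((a + 1) ^ (2 * k) + (a + 1) ^ (2 * k)) := by
            rw [show ((p + q + 2 : ℕ) : ℝ) = a + 2 by push_cast [a]; ring]
            gcongr
          _ ≤ (a + 2) ^ (2 * (k + 1)) := pow_add_mul_le_add_two_pow (Nat.cast_nonneg _) k
          _ = _ := by push_cast [a]; ring

theorem radialPolyAux_add_two_mul (n t : ℕ) (r : ℝ) :
    radialPolyAux (n + 2 * t) n r = (zernike (n + t) t).eval r := by
  rw [radialPolyAux, zernike_eq_sum_range (n + t) t (N := t + 1) (by omega), eval_finsetSum,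
    show (n + 2 * t - n) / 2 = t by omega, show (n + 2 * t + n) / 2 = n + t by omega]
  refine sum_congr rfl fun j hj => ?_
  rw [zernikeCoeff, if_pos (by simp at hj; omega), show n + t + t = n + 2 * t by ring]
  simp

theorem radialPoly_eq_eval_zernike_or_eq_zero (m : ℕ) (l : ℤ) :
    (∃ p q, p + q = m ∧ radialPoly m l = fun r => (zernike p q).eval r) ∨
      radialPoly m l = 0 := by
  by_cases h : l.natAbs ≤ m ∧ Even (m - l.natAbs)
  · obtain ⟨t, ht⟩ := h.2
    refine Or.inl ⟨l.natAbs + t, t, by omega, funext fun r => ?_⟩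
    rw [radialPoly, if_pos h, show m = l.natAbs + 2 * t by omega, radialPolyAux_add_two_mul]
  · exact Or.inr (funext fun r => if_neg h)

/-- Uniform bound for the `k`-th derivative of a radial polynomial on `[0,1]`:
`1` for `k = 0` and `m^{2k}` for `k ≥ 1`. -/
theorem radialPoly_iteratedDeriv_bound (k m : ℕ) (l : ℤ) :
    ∀ r ∈ Set.Icc (0 : ℝ) 1,
      |iteratedDeriv k (radialPoly m l) r| ≤
        if k = 0 then 1 else (m : ℝ) ^ (2 * k) := by
  intro r hr
  have hbound : |iteratedDeriv k (radialPoly m l) r| ≤ (m : ℝ) ^ (2 * k) := by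
    rcases radialPoly_eq_eval_zernike_or_eq_zero m l with ⟨p, q, rfl, hR⟩ | hR
    · rw [hR, Polynomial.iteratedDeriv_eval]
      exact abs_eval_iterate_derivative_zernike_le k p q (abs_le.mpr ⟨by linarith [hr.1], hr.2⟩)
    · simp [hR]
  split_ifs with hk
  · simpa [hk] using hbound
  · exact hbound
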